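/- arXiv:1204.6681 — 2 statements merged into one kernel-verified Lean document; each statement's English description precedes it below -/
import Mathlib

section
/- Let G and H be finite simple graphs such that neither G nor H has an isolatable vertex, and suppose the Cartesian product G □ H is well-covered. Then at least one of G or H has the property that any two disjoint maximal independent sets in it have the same cardinality. -/
/-- A set of vertices is independent if no two of its vertices are adjacent. -/
def IsIndep {V : Type*} (G : SimpleGraph V) (s : Set V) : Prop :=
  ∀ ⦃u⦄, u ∈ s → ∀ ⦃v⦄, v ∈ s → ¬ G.Adj u v

/-- A maximal independent set: independent and contained in no strictly larger
independent set. -/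
def MaxIndep {V : Type*} (G : SimpleGraph V) (s : Set V) : Prop :=
  IsIndep G s ∧ ∀ t : Set V, IsIndep G t → s ⊆ t → s = t

/-- A maximal independent set of the subgraph induced on `A`. -/
def MaxIndepOn {V : Type*} (G : SimpleGraph V) (A : Set V) (s : Set V) : Prop :=
  s ⊆ A ∧ IsIndep G s ∧ ∀ t : Set V, t ⊆ A → IsIndep G t → s ⊆ t → s = t

/-- A graph is well-covered if every maximal independent set has the same cardinality. -/
def WellCovered {V : Type*} (G : SimpleGraph V) : Prop :=
  ∀ s t : Set V, MaxIndep G s → MaxIndep G t → s.ncard = t.ncard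

/-- The closed neighborhood `N[S]`: the union of `S` with the set of all vertices
adjacent to some vertex of `S`. -/
def ClosedNbhd {V : Type*} (G : SimpleGraph V) (S : Set V) : Set V :=
  S ∪ {v | ∃ u ∈ S, G.Adj u v}

/-- A vertex `x` is isolatable if there is an independent set `M` such that `x` is the
unique vertex lying outside `N[M]`. -/
def Isolatable {V : Type*} (G : SimpleGraph V) (x : V) : Prop :=
  ∃ M : Set V, IsIndep G M ∧ (ClosedNbhd G M)ᶜ = {x}

/-!
Suppose `A, B` are disjoint maximal independent sets of `G` and `C, D` disjoint maximal
independent sets of `H`. Complete the checkerboard `A × C ∪ B × D` by a set `T` that is maximal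
independent in the region `(A ∪ B)ᶜ × (C ∪ D)ᶜ`; swapping `A` and `B` and keeping `T` gives a
second maximal independent set of `G □ H`. Their cardinalities differ by
`(|A| - |B|) (|C| - |D|)`, so well-coveredness of `G □ H` forces `|A| = |B|` or `|C| = |D|`.
-/

open Set SimpleGraph

section

variable {V W : Type*} {G : SimpleGraph V} {H : SimpleGraph W}

lemma closedNbhd_mono {S T : Set V} (h : S ⊆ T) : ClosedNbhd G S ⊆ ClosedNbhd G T := by
  rintro v (hv | ⟨u, hu, huv⟩)
  · exact Or.inl (h hv)
  · exact Or.inr ⟨u, h hu, huv⟩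

lemma IsIndep.insert {s : Set V} {v : V} (hs : IsIndep G s) (hv : v ∉ ClosedNbhd G s) :
    IsIndep G (insert v s) := by
  rintro u (rfl | hu) w (rfl | hw) huw
  · exact G.irrefl huw
  · exact hv (Or.inr ⟨w, hw, huw.symm⟩)
  · exact hv (Or.inr ⟨u, hu, huw⟩)
  · exact hs hu hw huw

lemma maxIndep_iff {s : Set V} : MaxIndep G s ↔ IsIndep G s ∧ ClosedNbhd G s = univ := by
  refine ⟨fun ⟨hs, hmax⟩ => ⟨hs, eq_univ_of_forall fun v => ?_⟩, fun ⟨hs, hdom⟩ => ⟨hs, ?_⟩⟩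
  · by_contra hv
    have hvs : v ∈ s := (hmax _ (hs.insert hv) (subset_insert v s)).symm ▸ mem_insert v s
    exact hv (Or.inl hvs)
  · intro t ht hst
    refine hst.antisymm fun v hv => ?_
    rcases hdom.symm ▸ mem_univ v with hvs | ⟨u, hu, huv⟩
    · exact hvs
    · exact absurd huv (ht (hst hu) hv)

lemma MaxIndepOn.subset_closedNbhd {A s : Set V} (h : MaxIndepOn G A s) :
    A ⊆ ClosedNbhd G s := by
  obtain ⟨hsA, hs, hmax⟩ := h
  intro v hvA
  by_contra hv
  have hvs : v ∈ s :=
    (hmax _ (insert_subset hvA hsA) (hs.insert hv) (subset_insert v s)).symm ▸ mem_insert v s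
  exact hv (Or.inl hvs)

lemma exists_maxIndepOn [Finite V] (G : SimpleGraph V) (A : Set V) : ∃ s, MaxIndepOn G A s := by
  obtain ⟨s, ⟨hsA, hs⟩, hmax⟩ :=
    (toFinite {s : Set V | s ⊆ A ∧ IsIndep G s}).exists_maximal
      ⟨∅, empty_subset A, fun _ hu => hu.elim⟩
  exact ⟨s, hsA, hs, fun t htA ht hst => hst.antisymm (hmax ⟨htA, ht⟩ hst)⟩

lemma isIndep_union {s t : Set V} (hs : IsIndep G s) (ht : IsIndep G t)
    (hst : ∀ u ∈ s, ∀ v ∈ t, ¬ G.Adj u v) : IsIndep G (s ∪ t) := by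
  rintro u (hu | hu) v (hv | hv) huv
  · exact hs hu hv huv
  · exact hst u hu v hv huv
  · exact hst v hv u hu huv.symm
  · exact ht hu hv huv

lemma not_boxProd_adj_of_ne {x y : V × W} (h₁ : x.1 ≠ y.1) (h₂ : x.2 ≠ y.2) :
    ¬ (G □ H).Adj x y := by
  rw [boxProd_adj]
  rintro (⟨-, h⟩ | ⟨-, h⟩)
  exacts [h₂ h, h₁ h]

lemma IsIndep.boxProd_prod {A : Set V} {C : Set W} (hA : IsIndep G A) (hC : IsIndep H C) :
    IsIndep (G □ H) (A ×ˢ C) := by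
  rintro x ⟨hx₁, hx₂⟩ y ⟨hy₁, hy₂⟩ hxy
  rcases boxProd_adj.mp hxy with ⟨h, -⟩ | ⟨h, -⟩
  exacts [hA hx₁ hy₁ h, hC hx₂ hy₂ h]

lemma preimage_union_preimage_subset_closedNbhd_prod {A : Set V} {C : Set W}
    (hA : ClosedNbhd G A = univ) (hC : ClosedNbhd H C = univ) :
    Prod.fst ⁻¹' A ∪ Prod.snd ⁻¹' C ⊆ ClosedNbhd (G □ H) (A ×ˢ C) := by
  rintro ⟨x, y⟩ (hx | hy)
  · rcases hC.symm ▸ mem_univ y with hy | ⟨c, hc, hcy⟩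
    · exact Or.inl ⟨hx, hy⟩
    · exact Or.inr ⟨(x, c), ⟨hx, hc⟩, boxProd_adj_right.mpr hcy⟩
  · rcases hA.symm ▸ mem_univ x with hx | ⟨a, ha, hax⟩
    · exact Or.inl ⟨hx, hy⟩
    · exact Or.inr ⟨(a, y), ⟨ha, hy⟩, boxProd_adj_left.mpr hax⟩

section Checkerboard

variable {A B : Set V} {C D : Set W} {T : Set (V × W)}

lemma maxIndep_boxProd_checkerboard_union (hA : MaxIndep G A) (hB : MaxIndep G B)
    (hC : MaxIndep H C) (hD : MaxIndep H D) (hAB : Disjoint A B) (hCD : Disjoint C D)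
    (hT : MaxIndepOn (G □ H) ((A ∪ B)ᶜ ×ˢ (C ∪ D)ᶜ) T) :
    MaxIndep (G □ H) (A ×ˢ C ∪ B ×ˢ D ∪ T) := by
  rw [maxIndep_iff] at hA hB hC hD ⊢
  have hchecker : IsIndep (G □ H) (A ×ˢ C ∪ B ×ˢ D) :=
    isIndep_union (hA.1.boxProd_prod hC.1) (hB.1.boxProd_prod hD.1)
      fun _ hu _ hv => not_boxProd_adj_of_ne (hAB.ne_of_mem hu.1 hv.1) (hCD.ne_of_mem hu.2 hv.2)
  have hT_out : ∀ u ∈ A ×ˢ C ∪ B ×ˢ D, ∀ v ∈ T, u.1 ≠ v.1 ∧ u.2 ≠ v.2 := by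
    rintro u hu v hv
    have hv' := hT.1 hv
    rcases hu with ⟨hu₁, hu₂⟩ | ⟨hu₁, hu₂⟩
    · exact ⟨fun h => hv'.1 (Or.inl (h ▸ hu₁)), fun h => hv'.2 (Or.inl (h ▸ hu₂))⟩
    · exact ⟨fun h => hv'.1 (Or.inr (h ▸ hu₁)), fun h => hv'.2 (Or.inr (h ▸ hu₂))⟩
  refine ⟨isIndep_union hchecker hT.2.1 fun u hu v hv =>
    not_boxProd_adj_of_ne (hT_out u hu v hv).1 (hT_out u hu v hv).2, eq_univ_of_forall ?_⟩
  rintro ⟨x, y⟩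
  by_cases hAC : x ∈ A ∨ y ∈ C
  · exact closedNbhd_mono (subset_union_left.trans subset_union_left)
      (preimage_union_preimage_subset_closedNbhd_prod hA.2 hC.2 hAC)
  by_cases hBD : x ∈ B ∨ y ∈ D
  · exact closedNbhd_mono (subset_union_right.trans subset_union_left)
      (preimage_union_preimage_subset_closedNbhd_prod hB.2 hD.2 hBD)
  push Not at hAC hBD
  exact closedNbhd_mono subset_union_right <| hT.subset_closedNbhd
    ⟨fun h => h.elim hAC.1 hBD.1, fun h => h.elim hAC.2 hBD.2⟩

lemma ncard_checkerboard_union [Finite V] [Finite W] (hAB : Disjoint A B)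
    (hT : T ⊆ (A ∪ B)ᶜ ×ˢ (C ∪ D)ᶜ) :
    (A ×ˢ C ∪ B ×ˢ D ∪ T).ncard = A.ncard * C.ncard + B.ncard * D.ncard + T.ncard := by
  have hdisj : Disjoint (A ×ˢ C) (B ×ˢ D) :=
    disjoint_left.mpr fun _ hu hv => hAB.ne_of_mem hu.1 hv.1 rfl
  have hdisjT : Disjoint (A ×ˢ C ∪ B ×ˢ D) T := by
    refine disjoint_left.mpr fun u hu hv => (hT hv).1 ?_
    rcases hu with hu | hu
    exacts [Or.inl hu.1, Or.inr hu.1]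
  rw [ncard_union_eq hdisjT, ncard_union_eq hdisj, ncard_prod, ncard_prod]

end Checkerboard

end

lemma Nat.eq_or_eq_of_mul_add_mul_eq {a b c d : ℕ} (h : a * c + b * d = b * c + a * d) :
    a = b ∨ c = d := by
  have h' : (a * c + b * d : ℤ) = b * c + a * d := by exact_mod_cast h
  have : ((a : ℤ) - b) * ((c : ℤ) - d) = 0 := by linear_combination h'
  rcases Int.mul_eq_zero.mp this with h | h
  exacts [Or.inl (by omega), Or.inr (by omega)]

theorem stmt_4_general {V W : Type*} [Fintype V] [Fintype W]
    (G : SimpleGraph V) (H : SimpleGraph W)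
    (hGH : WellCovered (G.boxProd H)) :
    (∀ M N : Set V, MaxIndep G M → MaxIndep G N → Disjoint M N → M.ncard = N.ncard) ∨
    (∀ M N : Set W, MaxIndep H M → MaxIndep H N → Disjoint M N → M.ncard = N.ncard) := by
  by_contra! h
  obtain ⟨⟨A, B, hA, hB, hAB, hAB_card⟩, C, D, hC, hD, hCD, hCD_card⟩ := h
  obtain ⟨T, hT⟩ := exists_maxIndepOn (G □ H) ((A ∪ B)ᶜ ×ˢ (C ∪ D)ᶜ)
  have hT' : MaxIndepOn (G □ H) ((B ∪ A)ᶜ ×ˢ (C ∪ D)ᶜ) T := by rwa [union_comm B]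
  have hcard := hGH _ _ (maxIndep_boxProd_checkerboard_union hA hB hC hD hAB hCD hT)
    (maxIndep_boxProd_checkerboard_union hB hA hC hD hAB.symm hCD hT')
  rw [ncard_checkerboard_union hAB hT.1, ncard_checkerboard_union hAB.symm hT'.1,
    Nat.add_right_cancel_iff] at hcard
  exact (Nat.eq_or_eq_of_mul_add_mul_eq hcard).elim hAB_card hCD_card

/-- If neither `G` nor `H` has an isolatable vertex and `G □ H` is well-covered, then
at least one of `G` or `H` has the property that any two disjoint maximal independent
sets have the same cardinality. -/
theorem stmt_4 {V W : Type*} [Fintype V] [Fintype W]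
    (G : SimpleGraph V) (H : SimpleGraph W)
    (hGiso : ∀ x : V, ¬ Isolatable G x) (hHiso : ∀ y : W, ¬ Isolatable H y)
    (hGH : WellCovered (G.boxProd H)) :
    (∀ M N : Set V, MaxIndep G M → MaxIndep G N → Disjoint M N → M.ncard = N.ncard) ∨
    (∀ M N : Set W, MaxIndep H M → MaxIndep H N → Disjoint M N → M.ncard = N.ncard) :=
  stmt_4_general G H hGH
end

section
/- Let G and H be finite simple graphs, let A₁, A₂, …, A_t be a greedy independent decomposition of G, let B₁, B₂, …, B_s be a greedy independent decomposition of H, and set p = min{s, t}. Then the set (A₁ × B₁) ∪ (A₂ × B₂) ∪ ⋯ ∪ (A_p × B_p) is a maximal independent set in the Cartesian product G □ H. -/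
/-- A greedy independent decomposition of `G`: a partition `A 0, …, A (t-1)` of the
vertex set such that each `A i` is a maximal independent set of the subgraph induced
by the vertices outside `A 0 ∪ ⋯ ∪ A (i-1)`. -/
def GreedyDecomp {V : Type*} (G : SimpleGraph V) (t : ℕ) (A : ℕ → Set V) : Prop :=
  (⋃ i < t, A i) = Set.univ ∧
  (∀ i < t, (A i).Nonempty) ∧
  (∀ i < t, ∀ j < t, i ≠ j → Disjoint (A i) (A j)) ∧
  (∀ i < t, MaxIndepOn G (⋃ j < i, A j)ᶜ (A i))

/-!
Every vertex of `A j` has a neighbour in each earlier class `A i`, `i < j`, since `A i` is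
maximal among the vertices not yet used and that vertex was still available. Now take
`(x, y) ∉ D := ⋃ i < p, A i × B i` with `x ∈ A i`, `y ∈ B j`; then `i ≠ j`, and if, say,
`i < j`, then `y` has a neighbour `y' ∈ B i`, so `(x, y')` is a neighbour of `(x, y)` in `D`.
Independence of `D` holds because the classes are independent and pairwise disjoint: an
edge of `G □ H` between two cells `A i × B i` and `A j × B j` moves one coordinate and
fixes the other, which forces `i = j`.
-/

section

variable {V W : Type*} {G : SimpleGraph V} {H : SimpleGraph W}

lemma MaxIndepOn.exists_adj {A s : Set V} (h : MaxIndepOn G A s) {x : V} (hxA : x ∈ A)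
    (hxs : x ∉ s) : ∃ u ∈ s, G.Adj u x := by
  obtain ⟨hsA, hs, hmax⟩ := h
  by_contra! hx
  have hind : IsIndep G (insert x s) := by
    rintro u (rfl | hu) v (rfl | hv) huv
    · exact G.loopless.irrefl _ huv
    · exact hx v hv huv.symm
    · exact hx u hu huv
    · exact hs hu hv huv
  have := hmax _ (Set.insert_subset hxA hsA) hind (Set.subset_insert x s)
  exact hxs (this ▸ Set.mem_insert x s)

lemma maxIndep_of_forall_exists_adj {s : Set V} (hs : IsIndep G s)
    (h : ∀ v ∉ s, ∃ u ∈ s, G.Adj u v) : MaxIndep G s := by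
  refine ⟨hs, fun t ht hst => hst.antisymm fun v hvt => ?_⟩
  by_contra hvs
  obtain ⟨u, hus, huv⟩ := h v hvs
  exact ht (hst hus) hvt huv

namespace GreedyDecomp

variable {t : ℕ} {A : ℕ → Set V}

lemma exists_mem (h : GreedyDecomp G t A) (x : V) : ∃ i < t, x ∈ A i := by
  have hx : x ∈ ⋃ i < t, A i := h.1 ▸ Set.mem_univ x
  simpa using hx

lemma eq_of_mem (h : GreedyDecomp G t A) {i j : ℕ} (hi : i < t) (hj : j < t) {x : V}
    (hxi : x ∈ A i) (hxj : x ∈ A j) : i = j := by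
  by_contra hij
  exact (h.2.2.1 i hi j hj hij).ne_of_mem hxi hxj rfl

lemma isIndep (h : GreedyDecomp G t A) {i : ℕ} (hi : i < t) : IsIndep G (A i) :=
  (h.2.2.2 i hi).2.1

lemma exists_adj_of_lt (h : GreedyDecomp G t A) {i j : ℕ} (hij : i < j) (hj : j < t)
    {x : V} (hx : x ∈ A j) : ∃ u ∈ A i, G.Adj u x := by
  have hit : i < t := hij.trans hj
  refine (h.2.2.2 i hit).exists_adj ?_ fun hxi => hij.ne (h.eq_of_mem hit hj hxi hx)
  simp only [Set.mem_compl_iff, Set.mem_iUnion, not_exists]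
  exact fun k hki hxk => (hki.trans hij).ne (h.eq_of_mem (by omega) hj hxk hx)

end GreedyDecomp

lemma isIndep_boxProd_iUnion_prod {p : ℕ} {A : ℕ → Set V} {B : ℕ → Set W}
    (hA : ∀ i < p, IsIndep G (A i)) (hB : ∀ i < p, IsIndep H (B i))
    (hAinj : ∀ i < p, ∀ j < p, ∀ x, x ∈ A i → x ∈ A j → i = j)
    (hBinj : ∀ i < p, ∀ j < p, ∀ y, y ∈ B i → y ∈ B j → i = j) :
    IsIndep (G.boxProd H) (⋃ i < p, A i ×ˢ B i) := by
  simp only [IsIndep, Set.mem_iUnion, Set.mem_prod]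
  rintro ⟨x, y⟩ ⟨i, hi, hx, hy⟩ ⟨x', y'⟩ ⟨j, hj, hx', hy'⟩ hadj
  rcases SimpleGraph.boxProd_adj.mp hadj with ⟨hG, rfl⟩ | ⟨hH, rfl⟩
  · obtain rfl := hBinj i hi j hj y hy hy'
    exact hA i hi hx hx' hG
  · obtain rfl := hAinj i hi j hj x hx hx'
    exact hB i hi hy hy' hH

end

theorem stmt_8_general {V W : Type*}
    (G : SimpleGraph V) (H : SimpleGraph W)
    (t s : ℕ) (A : ℕ → Set V) (B : ℕ → Set W)
    (hA : GreedyDecomp G t A) (hB : GreedyDecomp H s B) :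
    MaxIndep (G.boxProd H) (⋃ i < min s t, (A i) ×ˢ (B i)) := by
  have hAt : ∀ {i}, i < min s t → i < t := fun hi => hi.trans_le (min_le_right s t)
  have hBs : ∀ {i}, i < min s t → i < s := fun hi => hi.trans_le (min_le_left s t)
  refine maxIndep_of_forall_exists_adj
    (isIndep_boxProd_iUnion_prod (fun i hi => hA.isIndep (hAt hi))
      (fun i hi => hB.isIndep (hBs hi))
      (fun i hi j hj _ => hA.eq_of_mem (hAt hi) (hAt hj))
      (fun i hi j hj _ => hB.eq_of_mem (hBs hi) (hBs hj))) ?_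
  rintro ⟨x, y⟩ hxy
  simp only [Set.mem_iUnion, Set.mem_prod, exists_prop] at hxy ⊢
  obtain ⟨i, hit, hx⟩ := hA.exists_mem x
  obtain ⟨j, hjs, hy⟩ := hB.exists_mem y
  rcases lt_trichotomy i j with hij | rfl | hji
  · obtain ⟨y', hy', hadj⟩ := hB.exists_adj_of_lt hij hjs hy
    exact ⟨(x, y'), ⟨i, lt_min (hij.trans hjs) hit, hx, hy'⟩,
      SimpleGraph.boxProd_adj.mpr (Or.inr ⟨hadj, rfl⟩)⟩
  · exact absurd ⟨i, lt_min hjs hit, hx, hy⟩ hxy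
  · obtain ⟨x', hx', hadj⟩ := hA.exists_adj_of_lt hji hit hx
    exact ⟨(x', y), ⟨j, lt_min hjs (hji.trans hit), hx', hy⟩,
      SimpleGraph.boxProd_adj.mpr (Or.inl ⟨hadj, rfl⟩)⟩

/-- The diagonal set built from greedy independent decompositions of `G` and `H` is a
maximal independent set of `G □ H`. -/
theorem stmt_8 {V W : Type*} [Fintype V] [Fintype W]
    (G : SimpleGraph V) (H : SimpleGraph W)
    (t s : ℕ) (A : ℕ → Set V) (B : ℕ → Set W)
    (hA : GreedyDecomp G t A) (hB : GreedyDecomp H s B) :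
    MaxIndep (G.boxProd H) (⋃ i < min s t, (A i) ×ˢ (B i)) :=
  stmt_8_general G H t s A B hA hB
end
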